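/- arXiv:2503.13718 — 2 statements merged into one kernel-verified Lean document; each statement's English description precedes it below -/
import Mathlib

section
/- For μ < 0 and q > 0, the function μ ↦ (1/2) ∫₀^∞ e^{μ t} (exp(−q²/(4t)) − 1) dt equals ∂_μ [ log √(−μ) + K₀(√(−μ) q) ]. -/
/-- The Macdonald function (modified Bessel function of the second kind of order 0),
defined for `t > 0` by `K₀(t) = ∫₀^∞ exp(-t cosh s) ds`. -/
noncomputable def besselK0 (t : ℝ) : ℝ :=
  ∫ s in Set.Ioi (0 : ℝ), Real.exp (-t * Real.cosh s)

/-!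
Substituting `t = (q / 2a) eᵘ` in `∫ℝ exp (-a q cosh u) du = 2 K₀(a q)` gives
`K₀(a q) = ½ ∫₀^∞ exp (-a² t - q² / 4t) dt / t`. With `a² = -μ`, differentiating under the
integral sign (the derivative in `μ` is dominated by `exp (μ t / 2)` near `μ`) yields
`½ ∫₀^∞ exp (μ t - q² / 4t) dt`, while `log √(-μ)` has derivative `1 / 2μ = -½ ∫₀^∞ exp (μ t) dt`.
-/

open MeasureTheory Real Set Filter

lemma integral_exp_neg_mul_cosh (x : ℝ) : ∫ u, exp (-x * cosh u) = 2 * besselK0 x := by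
  rw [besselK0]
  simpa only [cosh_abs] using integral_comp_abs (f := fun u => exp (-x * cosh u))

theorem besselK0_mul_eq_integral {a q : ℝ} (ha : 0 < a) (hq : 0 < q) :
    besselK0 (a * q) = (1 / 2) * ∫ t in Ioi 0, exp (-a ^ 2 * t - q ^ 2 / (4 * t)) / t := by
  set c := q / (2 * a)
  have hc : 0 < c := by positivity
  have himage : (fun u => c * exp u) '' univ = Ioi 0 := by
    rw [image_univ, range_comp' (c * ·) exp, range_exp, image_const_mul_Ioi_zero hc]
  have hinj : InjOn (fun u => c * exp u) univ := fun u _ v _ h =>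
    exp_injective (mul_left_cancel₀ hc.ne' h)
  have hsubst := integral_image_eq_integral_abs_deriv_smul MeasurableSet.univ
    (fun u _ => ((hasDerivAt_exp u).const_mul c).hasDerivWithinAt) hinj
    (fun t => exp (-a ^ 2 * t - q ^ 2 / (4 * t)) / t)
  have hintegrand (u : ℝ) :
      |c * exp u| • (exp (-a ^ 2 * (c * exp u) - q ^ 2 / (4 * (c * exp u))) / (c * exp u))
        = exp (-(a * q) * cosh u) := by
    have hcu : 0 < c * exp u := by positivity
    rw [smul_eq_mul, abs_of_pos hcu, mul_div_cancel₀ _ hcu.ne', cosh_eq, exp_neg]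
    congr 1
    simp only [c]
    field_simp
    ring
  rw [himage, Measure.restrict_univ] at hsubst
  simp only [hintegrand, integral_exp_neg_mul_cosh] at hsubst
  linarith

lemma exp_neg_div_div_le {a t : ℝ} (ha : 0 < a) (ht : 0 < t) : exp (-(a / t)) / t ≤ 1 / a := by
  rw [div_le_div_iff₀ ht ha, one_mul, exp_neg, inv_mul_le_iff₀ (exp_pos _)]
  calc a = a / t * t := (div_mul_cancel₀ a ht.ne').symm
    _ ≤ exp (a / t) * t := by gcongr; linarith [add_one_le_exp (a / t)]

lemma exp_mul_sub_div_le (ν q : ℝ) {t : ℝ} (ht : 0 ≤ t) :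
    exp (ν * t - q ^ 2 / (4 * t)) ≤ exp (ν * t) :=
  exp_le_exp.2 (sub_le_self _ (by positivity))

lemma integrableOn_exp_mul_sub_div {ν : ℝ} (hν : ν < 0) (q : ℝ) :
    IntegrableOn (fun t => exp (ν * t - q ^ 2 / (4 * t))) (Ioi 0) := by
  refine (integrableOn_exp_mul_Ioi hν 0).mono' (by fun_prop : Measurable _).aestronglyMeasurable ?_
  filter_upwards [ae_restrict_mem measurableSet_Ioi] with t (ht : 0 < t)
  rw [norm_of_nonneg (exp_pos _).le]
  exact exp_mul_sub_div_le ν q ht.le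

lemma integrableOn_exp_mul_sub_div_div {ν q : ℝ} (hν : ν < 0) (hq : q ≠ 0) :
    IntegrableOn (fun t => exp (ν * t - q ^ 2 / (4 * t)) / t) (Ioi 0) := by
  refine ((integrableOn_exp_mul_Ioi hν 0).const_mul (4 / q ^ 2)).mono'
    (by fun_prop : Measurable _).aestronglyMeasurable ?_
  filter_upwards [ae_restrict_mem measurableSet_Ioi] with t (ht : 0 < t)
  rw [norm_of_nonneg (div_pos (exp_pos _) ht).le, sub_eq_add_neg, exp_add, mul_div_assoc,
    mul_comm (4 / q ^ 2), ← div_div]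
  exact mul_le_mul_of_nonneg_left
    ((exp_neg_div_div_le (by positivity) ht).trans_eq (one_div_div _ _)) (exp_pos _).le

theorem hasDerivAt_integral_exp_mul_sub_div_div {μ q : ℝ} (hμ : μ < 0) (hq : q ≠ 0) :
    HasDerivAt (fun ν => ∫ t in Ioi 0, exp (ν * t - q ^ 2 / (4 * t)) / t)
      (∫ t in Ioi 0, exp (μ * t - q ^ 2 / (4 * t))) μ := by
  refine (hasDerivAt_integral_of_dominated_loc_of_deriv_le (μ := volume.restrict (Ioi 0))
    (F := fun ν t => exp (ν * t - q ^ 2 / (4 * t)) / t)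
    (F' := fun ν t => exp (ν * t - q ^ 2 / (4 * t)))
    (bound := fun t => exp (μ / 2 * t))
    (Iio_mem_nhds (by linarith : μ < μ / 2))
    (Eventually.of_forall fun ν => (by fun_prop : Measurable _).aestronglyMeasurable)
    (integrableOn_exp_mul_sub_div_div hμ hq) (by fun_prop : Measurable _).aestronglyMeasurable
    ?_ (integrableOn_exp_mul_Ioi (by linarith) 0) ?_).2
  · filter_upwards [ae_restrict_mem measurableSet_Ioi] with t (ht : 0 < t) ν (hν : ν < μ / 2)
    rw [norm_of_nonneg (exp_pos _).le]
    exact (exp_mul_sub_div_le ν q ht.le).trans (exp_le_exp.2 (by gcongr))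
  · filter_upwards [ae_restrict_mem measurableSet_Ioi] with t (ht : 0 < t) ν _
    simpa [ht.ne'] using
      (((hasDerivAt_id ν).mul_const t).sub_const (q ^ 2 / (4 * t))).exp.div_const t

lemma integral_exp_mul_mul_exp_sub_one {μ : ℝ} (hμ : μ < 0) (q : ℝ) :
    ∫ t in Ioi 0, exp (μ * t) * (exp (-q ^ 2 / (4 * t)) - 1)
      = (∫ t in Ioi 0, exp (μ * t - q ^ 2 / (4 * t))) + 1 / μ := by
  have hsplit : ∀ t : ℝ, exp (μ * t) * (exp (-q ^ 2 / (4 * t)) - 1)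
      = exp (μ * t - q ^ 2 / (4 * t)) - exp (μ * t) := fun t => by
    rw [mul_sub_one, ← exp_add, neg_div, ← sub_eq_add_neg]
  simp_rw [hsplit]
  rw [integral_sub (integrableOn_exp_mul_sub_div hμ q) (integrableOn_exp_mul_Ioi hμ 0),
    integral_exp_mul_Ioi hμ, mul_zero, exp_zero]
  ring

lemma hasDerivAt_log_sqrt_neg {μ : ℝ} (hμ : μ < 0) :
    HasDerivAt (fun ν => log (sqrt (-ν))) (1 / (2 * μ)) μ := by
  have h : HasDerivAt (fun ν => log (-ν) / 2) (1 / (2 * μ)) μ := by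
    refine (((hasDerivAt_neg μ).log (neg_ne_zero.2 hμ.ne)).div_const 2).congr_deriv ?_
    field_simp
  refine h.congr_of_eventuallyEq ?_
  filter_upwards [Iio_mem_nhds hμ] with ν (hν : ν < 0)
  exact log_sqrt (neg_nonneg.2 hν.le)

lemma hasDerivAt_besselK0_sqrt_neg_mul {μ q : ℝ} (hμ : μ < 0) (hq : 0 < q) :
    HasDerivAt (fun ν => besselK0 (sqrt (-ν) * q))
      ((1 / 2) * ∫ t in Ioi 0, exp (μ * t - q ^ 2 / (4 * t))) μ := by
  refine ((hasDerivAt_integral_exp_mul_sub_div_div hμ hq.ne').const_mul _).congr_of_eventuallyEq ?_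
  filter_upwards [Iio_mem_nhds hμ] with ν (hν : ν < 0)
  rw [besselK0_mul_eq_integral (sqrt_pos.2 (neg_pos.2 hν)) hq, sq_sqrt (neg_nonneg.2 hν.le)]
  simp only [neg_neg]

/-- For `μ < 0` and `q > 0`, the function
`μ ↦ (1/2) ∫₀^∞ e^{μ t} (exp(-q²/(4t)) - 1) dt` equals
`∂_μ [ log √(-μ) + K₀(√(-μ) q) ]`. -/
theorem deriv_log_add_besselK0 (q : ℝ) (hq : 0 < q) :
    ∀ μ : ℝ, μ < 0 →
      HasDerivAt (fun ν : ℝ => Real.log (Real.sqrt (-ν)) + besselK0 (Real.sqrt (-ν) * q))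
        ((1 / 2) * ∫ t in Set.Ioi (0 : ℝ),
          Real.exp (μ * t) * (Real.exp (-q ^ 2 / (4 * t)) - 1)) μ := by
  intro μ hμ
  rw [integral_exp_mul_mul_exp_sub_one hμ q]
  exact ((hasDerivAt_log_sqrt_neg hμ).add (hasDerivAt_besselK0_sqrt_neg_mul hμ hq)).congr_deriv
    (by ring)
end

section
/- If z(x) is holomorphic and injective near a point, then log | (x−y)√(z'(x)z'(y))/(z(y)−z(x)) | = Re[ (1/12) {z,x} (y − x)² ] + O(|x − y|³) as y → x. -/
open Complex Topology Asymptotics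

lemma coeff_eq_iteratedDeriv {f : ℂ → ℂ} {p : FormalMultilinearSeries ℂ ℂ ℂ}
    {x : ℂ} (hp : HasFPowerSeriesAt f p x) (n : ℕ) :
    p.coeff n = iteratedDeriv n f x / (n.factorial : ℂ) := by
  obtain ⟨r, hr⟩ := hp
  have h2 : (n.factorial : ℂ) * p.coeff n = iteratedDeriv n f x := by
    rw [iteratedDeriv_eq_iteratedFDeriv, ← hr.factorial_smul 1 n]
    simp [FormalMultilinearSeries.apply_eq_pow_smul_coeff, nsmul_eq_mul]
  rw [← h2, mul_div_cancel_left₀]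
  exact_mod_cast Nat.factorial_ne_zero n

lemma taylor2 {f : ℂ → ℂ} {x : ℂ} (hf : AnalyticAt ℂ f x) :
    (fun y => f y - (f x + deriv f x * (y - x) + (iteratedDeriv 2 f x / 2) * (y - x) ^ 2))
      =O[𝓝 x] fun y => ‖y - x‖ ^ 3 := by
  obtain ⟨p, hp⟩ := hf
  have ht : Filter.Tendsto (fun y : ℂ => y - x) (𝓝 x) (𝓝 0) := by
    simpa using (Filter.tendsto_id (x := 𝓝 x)).sub_const x
  have H := (hp.isBigO_sub_partialSum_pow 3).comp_tendsto ht
  refine H.congr (fun y => ?_) (fun y => rfl)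
  show f (x + (y - x)) - p.partialSum 3 (y - x) = _
  have hx1 : x + (y - x) = y := by ring
  rw [hx1]
  congr 1
  have c0 := coeff_eq_iteratedDeriv hp 0
  have c1 := coeff_eq_iteratedDeriv hp 1
  have c2 := coeff_eq_iteratedDeriv hp 2
  simp only [iteratedDeriv_zero, Nat.factorial_zero, Nat.cast_one, div_one] at c0
  simp only [iteratedDeriv_one, Nat.factorial_one, Nat.cast_one, div_one] at c1
  simp only [FormalMultilinearSeries.partialSum, Finset.sum_range_succ, Finset.sum_range_zero,
    FormalMultilinearSeries.apply_eq_pow_smul_coeff, smul_eq_mul]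
  rw [c0, c1, c2]
  norm_num
  ring

/-- The Schwarzian derivative `{f, z} = f'''/f' - (3/2) (f''/f')²`. -/
noncomputable def schwarzian (f : ℂ → ℂ) (z : ℂ) : ℂ :=
  iteratedDeriv 3 f z / deriv f z - (3 / 2) * (iteratedDeriv 2 f z / deriv f z) ^ 2

/-- If `z` is holomorphic and injective near `x` with `z' ≠ 0`, and `s` is the holomorphic
branch of `√(z'(x) z'(·))` with `s(x) = z'(x)`, then
`log |(x - y) √(z'(x) z'(y)) / (z(y) - z(x))| = Re[(1/12) {z, x} (y - x)²] + O(|x - y|³)`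
as `y → x`. -/
theorem log_abs_prime_form_expansion (U : Set ℂ) (hU : IsOpen U) (x : ℂ) (hx : x ∈ U)
    (z s : ℂ → ℂ) (hz : DifferentiableOn ℂ z U) (hinj : Set.InjOn z U)
    (hz' : ∀ y ∈ U, deriv z y ≠ 0)
    (hs : DifferentiableOn ℂ s U)
    (hs2 : ∀ y ∈ U, (s y) ^ 2 = deriv z x * deriv z y)
    (hsx : s x = deriv z x) :
    (fun y : ℂ => Real.log (‖(x - y) * s y / (z y - z x)‖)
        - ((1 / 12) * schwarzian z x * (y - x) ^ 2).re)
      =O[𝓝[≠] x] (fun y : ℂ => ‖x - y‖ ^ 3) := by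
  classical
  have ha : deriv z x ≠ 0 := hz' x hx
  set a := deriv z x with ha_def
  set b := iteratedDeriv 2 z x with hb_def
  set c := iteratedDeriv 3 z x with hc_def
  clear_value a b c
  have hzU : AnalyticOnNhd ℂ z U := hz.analyticOnNhd hU
  have hz2 : AnalyticOnNhd ℂ (deriv z) U := hzU.deriv
  have hz3 : AnalyticOnNhd ℂ (deriv (deriv z)) U := hz2.deriv
  obtain ⟨p, hp⟩ := hzU x hx
  set D := dslope z x with hD_def
  have hD : HasFPowerSeriesAt D p.fslope x := hp.has_fpower_series_dslope_fslope
  have hDx : D x = a := by rw [ha_def]; exact dslope_same z x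
  -- derivatives of D at x
  have hb2 : deriv (deriv z) x = b := by
    rw [hb_def, iteratedDeriv_succ, iteratedDeriv_one]
  have hc3 : deriv (deriv (deriv z)) x = c := by
    rw [hc_def, show (3 : ℕ) = 2 + 1 from rfl, iteratedDeriv_succ, iteratedDeriv_succ,
      iteratedDeriv_one]
  have hD1 : deriv D x = b / 2 := by
    have e1 : iteratedDeriv 1 D x / ((Nat.factorial 1 : ℕ) : ℂ)
        = iteratedDeriv 2 z x / ((Nat.factorial 2 : ℕ) : ℂ) := by
      rw [← coeff_eq_iteratedDeriv hD 1, p.coeff_fslope, coeff_eq_iteratedDeriv hp 2]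
    rw [iteratedDeriv_one] at e1
    norm_num [Nat.factorial] at e1
    rw [e1, hb_def]
  have hD2 : iteratedDeriv 2 D x = c / 3 := by
    have e2 : iteratedDeriv 2 D x / ((Nat.factorial 2 : ℕ) : ℂ)
        = iteratedDeriv 3 z x / ((Nat.factorial 3 : ℕ) : ℂ) := by
      rw [← coeff_eq_iteratedDeriv hD 2, p.coeff_fslope, coeff_eq_iteratedDeriv hp 3]
    norm_num [Nat.factorial] at e2
    rw [← hc_def] at e2
    linear_combination 2 * e2
  -- analytic neighborhood of D
  obtain ⟨V, hVsub, hVopen, hxV⟩ := mem_nhds_iff.mp hD.analyticAt.eventually_analyticAt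
  have hDV : AnalyticOnNhd ℂ D V := fun y hy => hVsub hy
  have hD'V : AnalyticOnNhd ℂ (deriv D) V := hDV.deriv
  -- the auxiliary functions
  set g : ℂ → ℂ := fun y => deriv z y / a with hg_def
  set h : ℂ → ℂ := fun y => D y / a with hh_def
  set g' : ℂ → ℂ := fun y => deriv (deriv z) y / a with hg'_def
  set h' : ℂ → ℂ := fun y => deriv D y / a with hh'_def
  set L : ℂ → ℂ := fun y => ((1 / 2 : ℝ) : ℂ) * Complex.log (g y) - Complex.log (h y) with hL_def
  have hgx : g x = 1 := by rw [hg_def]; simp only [← ha_def]; exact div_self ha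
  have hhx : h x = 1 := by simp [hh_def, hDx, div_self ha]
  have hgan : AnalyticAt ℂ g x := (hz2 x hx).div analyticAt_const ha
  have hhan : AnalyticAt ℂ h x := hD.analyticAt.div analyticAt_const ha
  have hLan : AnalyticAt ℂ L x :=
    (analyticAt_const.mul (hgan.clog (by rw [hgx]; exact one_mem_slitPlane))).sub
      (hhan.clog (by rw [hhx]; exact one_mem_slitPlane))
  -- eventually facts
  have hevU : ∀ᶠ y in 𝓝 x, y ∈ U := hU.mem_nhds hx
  have hevV : ∀ᶠ y in 𝓝 x, y ∈ V := hVopen.mem_nhds hxV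
  have hevg : ∀ᶠ y in 𝓝 x, g y ∈ slitPlane := by
    have : ∀ᶠ w in 𝓝 (g x), w ∈ slitPlane := by
      rw [hgx]; exact isOpen_slitPlane.eventually_mem one_mem_slitPlane
    exact hgan.continuousAt this
  have hevh : ∀ᶠ y in 𝓝 x, h y ∈ slitPlane := by
    have : ∀ᶠ w in 𝓝 (h x), w ∈ slitPlane := by
      rw [hhx]; exact isOpen_slitPlane.eventually_mem one_mem_slitPlane
    exact hhan.continuousAt this
  -- derivative of L, eventually near x
  have hLda : ∀ᶠ y in 𝓝 x, HasDerivAt L (((1 / 2 : ℝ) : ℂ) * (g' y / g y) - h' y / h y) y := by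
    filter_upwards [hevU, hevV, hevg, hevh] with y hyU hyV hyg hyh
    have Hg : HasDerivAt g (g' y) y := ((hz2 y hyU).differentiableAt.hasDerivAt).div_const a
    have Hh : HasDerivAt h (h' y) y := ((hDV y hyV).differentiableAt.hasDerivAt).div_const a
    exact ((Hg.clog hyg).const_mul _).sub (Hh.clog hyh)
  have hderivL : deriv L =ᶠ[𝓝 x] fun y => ((1 / 2 : ℝ) : ℂ) * (g' y / g y) - h' y / h y :=
    hLda.mono fun y hy => hy.deriv
  have hg'x : g' x = b / a := by simp [hg'_def, hb2]
  have hh'x : h' x = b / 2 / a := by simp [hh'_def, hD1]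
  have hL0 : L x = 0 := by
    simp [hL_def, hgx, hhx]
  have hLd0 : deriv L x = 0 := by
    rw [hLda.self_of_nhds.deriv, hgx, hhx, hg'x, hh'x]
    field_simp
    push_cast; ring
  have hL2 : iteratedDeriv 2 L x / 2 = (1 / 12) * schwarzian z x := by
    have Hg : HasDerivAt g (g' x) x := ((hz2 x hx).differentiableAt.hasDerivAt).div_const a
    have Hg' : HasDerivAt g' (c / a) x := by
      have := ((hz3 x hx).differentiableAt.hasDerivAt).div_const a
      rwa [hc3] at this
    have Hh : HasDerivAt h (h' x) x := ((hDV x hxV).differentiableAt.hasDerivAt).div_const a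
    have Hh' : HasDerivAt h' (c / 3 / a) x := by
      have := ((hD'V x hxV).differentiableAt.hasDerivAt).div_const a
      have e : deriv (deriv D) x = c / 3 := by
        rw [← hD2, iteratedDeriv_succ, iteratedDeriv_one]
      rwa [e] at this
    have Hquot :
        HasDerivAt (fun y => ((1 / 2 : ℝ) : ℂ) * (g' y / g y) - h' y / h y)
          (((1 / 2 : ℝ) : ℂ) * ((c / a * g x - g' x * g' x) / g x ^ 2)
            - (c / 3 / a * h x - h' x * h' x) / h x ^ 2) x := by
      have q1 := (Hg'.div Hg (by rw [hgx]; exact one_ne_zero)).const_mul ((1 / 2 : ℝ) : ℂ)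
      have q2 := Hh'.div Hh (by rw [hhx]; exact one_ne_zero)
      exact q1.sub q2
    have e2 : iteratedDeriv 2 L x =
        ((1 / 2 : ℝ) : ℂ) * ((c / a * g x - g' x * g' x) / g x ^ 2)
          - (c / 3 / a * h x - h' x * h' x) / h x ^ 2 := by
      rw [iteratedDeriv_succ, iteratedDeriv_one, hderivL.deriv_eq, Hquot.deriv]
    rw [e2, hgx, hhx, hg'x, hh'x]
    rw [schwarzian, ← ha_def, ← hb_def, ← hc_def]
    push_cast
    simp only [div_eq_mul_inv, mul_inv, one_pow, mul_one, div_one]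
    ring
  -- Taylor expansion of L
  have T : (fun y => L y - (1 / 12) * schwarzian z x * (y - x) ^ 2) =O[𝓝 x]
      fun y => ‖y - x‖ ^ 3 := by
    refine (taylor2 hLan).congr (fun y => ?_) (fun y => rfl)
    rw [hL0, hLd0, hL2]; ring
  have Tre : (fun y => (L y - (1 / 12) * schwarzian z x * (y - x) ^ 2).re) =O[𝓝 x]
      fun y => ‖y - x‖ ^ 3 := by
    refine (IsBigO.trans ?_ T)
    refine isBigO_of_le _ (fun y => ?_)
    rw [Real.norm_eq_abs]
    exact Complex.abs_re_le_norm _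
  have Tfin := Tre.mono (nhdsWithin_le_nhds (s := {x}ᶜ))
  refine Tfin.congr' ?_ (Filter.Eventually.of_forall fun y => by simp [norm_sub_rev])
  -- eventual equality on the punctured neighborhood
  filter_upwards [self_mem_nhdsWithin,
    nhdsWithin_le_nhds hevU] with y hyne hyU
  have hyx : y ≠ x := hyne
  have hzy' : deriv z y ≠ 0 := hz' y hyU
  have hzz : z y - z x = (y - x) * D y := by
    rw [← sub_smul_dslope z x y, smul_eq_mul]
  have hDy : D y ≠ 0 := by
    intro h0
    exact hyx (hinj hyU hx (sub_eq_zero.mp (by rw [hzz, h0, mul_zero])))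
  have hsy : s y ≠ 0 := by
    intro h0
    have h1 := hs2 y hyU
    rw [h0, zero_pow (by norm_num : (2:ℕ) ≠ 0)] at h1
    exact (mul_ne_zero ha hzy') h1.symm
  -- the main pointwise identity
  have hyx' : y - x ≠ 0 := sub_ne_zero.mpr hyx
  have habs : ‖(x - y) * s y / (z y - z x)‖
      = ‖s y‖ / ‖D y‖ := by
    rw [hzz, show x - y = -(y - x) by ring]
    rw [norm_div, norm_mul, norm_mul, norm_neg]
    rw [mul_div_mul_left]
    simpa using hyx'
  have hS2 : (‖s y‖) ^ 2 = ‖a‖ * ‖deriv z y‖ := by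
    rw [← norm_mul, ← hs2 y hyU, ← norm_pow]
  have hA0 : ‖a‖ ≠ 0 := by simpa using ha
  have hZ0 : ‖deriv z y‖ ≠ 0 := by simpa using hzy'
  have hD0 : ‖D y‖ ≠ 0 := by simpa using hDy
  have hS0 : ‖s y‖ ≠ 0 := by simpa using hsy
  have hlogs : 2 * Real.log (‖s y‖)
      = Real.log (‖a‖) + Real.log (‖deriv z y‖) := by
    rw [← Real.log_mul hA0 hZ0, ← hS2, Real.log_pow]
    norm_num
  have hre : (L y).re = (1 / 2) * (Real.log (‖deriv z y‖) - Real.log (‖a‖))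
      - (Real.log (‖D y‖) - Real.log (‖a‖)) := by
    simp only [hL_def, Complex.sub_re, Complex.re_ofReal_mul, Complex.log_re]
    rw [hg_def, hh_def]
    simp only [norm_div]
    rw [Real.log_div hZ0 hA0, Real.log_div hD0 hA0]
  show (L y - (1 / 12) * schwarzian z x * (y - x) ^ 2).re
      = Real.log (‖(x - y) * s y / (z y - z x)‖)
      - ((1 / 12) * schwarzian z x * (y - x) ^ 2).re
  symm
  rw [Complex.sub_re, habs, Real.log_div hS0 hD0, hre]
  have : Real.log (‖s y‖)
      = (Real.log (‖a‖) + Real.log (‖deriv z y‖)) / 2 := by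
    linarith
  rw [this]
  ring
end
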